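/- arXiv:2005.11536 — 2 statements merged into one kernel-verified Lean document; each statement's English description precedes it below -/
import Mathlib

section
/- Let m ≥ 0 and let p = (p_1 ≥ p_2 ≥ … ≥ p_{2m+1} ≥ 0) be a partition with at most 2m+1 parts. Set α_k = ⌊(p_k + 2m + 1 − k)/2⌋ for 1 ≤ k ≤ 2m+1. Then Σ_{1≤k₁<k₂≤2m+1} min{α_{k₁}, α_{k₂}} − (1/6)·m(m−1)(4m+1) = Σ_{k=1}^{2m+1} (k−1)·p_k^odd. -/
/-- The number of odd boxes in row `k` of the Young diagram of `p`:
boxes `(k,j)` with `1 ≤ j ≤ p k` and `k + j` odd. -/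
def rowOdd (p : ℕ → ℕ) (k : ℕ) : ℕ :=
  ((Finset.Icc 1 (p k)).filter fun j => Odd (k + j)).card

-- count of j in [1,v] with k+j odd
lemma countOdd (k v : ℕ) :
    ((Finset.Icc 1 v).filter fun j => Odd (k + j)).card = (v + 1 - k % 2) / 2 := by
  induction v with
  | zero => simp; omega
  | succ v ih =>
    have h : Finset.Icc 1 (v+1) = insert (v+1) (Finset.Icc 1 v) := by
      ext x; simp [Finset.mem_Icc]; omega
    rw [h, Finset.filter_insert]
    by_cases hodd : Odd (k + (v+1))
    · rw [if_pos hodd, Finset.card_insert_of_notMem (by simp)]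
      rw [Nat.odd_iff] at hodd; omega
    · rw [if_neg hodd]; rw [Nat.odd_iff] at hodd; omega

lemma sumIcc_pred (n : ℕ) : 2 * ∑ k ∈ Finset.Icc 1 n, (k-1) = n * (n-1) := by
  induction n with
  | zero => simp
  | succ n ih =>
    rw [Finset.sum_Icc_succ_top (by omega)]
    cases n with
    | zero => simp_all
    | succ n =>
      zify at ih ⊢
      push_cast [Nat.succ_sub_one] at ih ⊢
      linarith [ih]

lemma sumC (m : ℕ) :
    6 * (∑ k ∈ Finset.Icc 1 (2*m+1), (k-1) * ((2*m+1-k)/2)) + m*(4*m+1)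
      = m*m*(4*m+1) := by
  induction m with
  | zero => simp
  | succ m ih =>
    have h1 : 2*(m+1)+1 = (2*m+1) + 1 + 1 := by ring
    rw [h1, Finset.sum_Icc_succ_top (by omega), Finset.sum_Icc_succ_top (by omega)]
    have h2 : ∑ k ∈ Finset.Icc 1 (2*m+1), (k-1)*((2*m+1+1+1-k)/2)
        = ∑ k ∈ Finset.Icc 1 (2*m+1), ((k-1)*((2*m+1-k)/2) + (k-1)) := by
      refine Finset.sum_congr rfl fun k hk => ?_
      simp only [Finset.mem_Icc] at hk
      have : (2*m+1+1+1-k)/2 = (2*m+1-k)/2 + 1 := by omega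
      rw [this, Nat.mul_add, Nat.mul_one]
    rw [h2, Finset.sum_add_distrib]
    have h3 := sumIcc_pred (2*m+1)
    have e1 : (2*m+1+1+1-(2*m+1+1))/2 = 0 := by omega
    have e2 : (2*m+1+1+1-(2*m+1+1+1))/2 = 0 := by omega
    rw [e1, e2]
    zify at ih h3 ⊢
    push_cast [Nat.succ_sub_one] at ih h3 ⊢
    nlinarith [ih, h3]

/-- with `α_k = ⌊(p_k + 2m + 1 − k)/2⌋`,
`Σ_{k₁<k₂} min{α_{k₁},α_{k₂}} − (1/6)m(m−1)(4m+1) = Σ_k (k−1)·p_k^odd`. -/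
theorem lusztig_symbol_identity_typeB (m : ℕ) (p : ℕ → ℕ)
    (hdec : ∀ k l, 1 ≤ k → k ≤ l → l ≤ 2 * m + 1 → p l ≤ p k) :
    (∑ k₁ ∈ Finset.Icc 1 (2 * m + 1), ∑ k₂ ∈ Finset.Icc 1 (2 * m + 1),
        if k₁ < k₂ then
          ((min ((p k₁ + (2 * m + 1) - k₁) / 2) ((p k₂ + (2 * m + 1) - k₂) / 2) : ℕ) : ℚ)
        else 0) -
      1 / 6 * (m : ℚ) * ((m : ℚ) - 1) * (4 * (m : ℚ) + 1) =
      ∑ k ∈ Finset.Icc 1 (2 * m + 1), ((k : ℚ) - 1) * (rowOdd p k : ℚ) := by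
  set n := 2 * m + 1 with hn
  set a : ℕ → ℕ := fun k => (p k + n - k) / 2 with ha
  -- monotonicity of α
  have hmono : ∀ k₁ k₂, 1 ≤ k₁ → k₁ ≤ k₂ → k₂ ≤ n → a k₂ ≤ a k₁ := by
    intro k₁ k₂ h1 h2 h3
    apply Nat.div_le_div_right
    have := hdec k₁ k₂ h1 h2 h3
    omega
  -- Step 1: collapse double sum
  have hstep1 : (∑ k₁ ∈ Finset.Icc 1 n, ∑ k₂ ∈ Finset.Icc 1 n,
      if k₁ < k₂ then ((min (a k₁) (a k₂) : ℕ) : ℚ) else 0)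
      = ∑ k ∈ Finset.Icc 1 n, (((k - 1 : ℕ)) : ℚ) * (a k : ℚ) := by
    rw [Finset.sum_comm]
    refine Finset.sum_congr rfl fun k₂ hk₂ => ?_
    simp only [Finset.mem_Icc] at hk₂
    have hfilter : (Finset.Icc 1 n).filter (fun k₁ => k₁ < k₂) = Finset.Ico 1 k₂ := by
      ext x; simp [Finset.mem_Icc, Finset.mem_Ico]; omega
    rw [← Finset.sum_filter, hfilter]
    have hcongr : ∀ k₁ ∈ Finset.Ico 1 k₂, ((min (a k₁) (a k₂) : ℕ) : ℚ) = (a k₂ : ℚ) := by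
      intro k₁ hk₁
      simp only [Finset.mem_Ico] at hk₁
      rw [min_eq_right (hmono k₁ k₂ hk₁.1 (le_of_lt hk₁.2) hk₂.2)]
    rw [Finset.sum_congr rfl hcongr, Finset.sum_const, Nat.card_Ico, nsmul_eq_mul]
  -- Step 2: α_k = rowOdd + e_k
  have hB : ∀ k ∈ Finset.Icc 1 n, a k = rowOdd p k + (n - k) / 2 := by
    intro k hk
    simp only [Finset.mem_Icc] at hk
    rw [ha]
    simp only
    rw [rowOdd, countOdd]
    omega
  have hstep2 : ∑ k ∈ Finset.Icc 1 n, (((k - 1 : ℕ)) : ℚ) * (a k : ℚ)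
      = (∑ k ∈ Finset.Icc 1 n, (((k - 1 : ℕ)) : ℚ) * (rowOdd p k : ℚ))
        + ((∑ k ∈ Finset.Icc 1 n, (k - 1) * ((n - k) / 2) : ℕ) : ℚ) := by
    push_cast
    rw [← Finset.sum_add_distrib]
    refine Finset.sum_congr rfl fun k hk => ?_
    rw [hB k hk]
    push_cast
    ring
  -- Step 3: the constant sum
  have hC := sumC m
  rw [← hn] at hC
  have hCQ : ((∑ k ∈ Finset.Icc 1 n, (k - 1) * ((n - k) / 2) : ℕ) : ℚ)
      = 1 / 6 * (m : ℚ) * ((m : ℚ) - 1) * (4 * (m : ℚ) + 1) := by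
    have : (6 : ℚ) * (∑ k ∈ Finset.Icc 1 n, (k - 1) * ((n - k) / 2) : ℕ)
        + (m : ℚ) * (4 * m + 1) = (m : ℚ) * m * (4 * m + 1) := by
      exact_mod_cast hC
    nlinarith [this]
  -- cast (k-1 : ℕ) to (k:ℚ)-1 on Icc
  have hcast : ∀ k ∈ Finset.Icc 1 n, (((k - 1 : ℕ)) : ℚ) = (k : ℚ) - 1 := by
    intro k hk
    simp only [Finset.mem_Icc] at hk
    have : (1 : ℕ) ≤ k := hk.1
    push_cast [Nat.cast_sub this]
    ring
  calc (∑ k₁ ∈ Finset.Icc 1 n, ∑ k₂ ∈ Finset.Icc 1 n,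
      if k₁ < k₂ then ((min (a k₁) (a k₂) : ℕ) : ℚ) else 0) -
      1 / 6 * (m : ℚ) * ((m : ℚ) - 1) * (4 * (m : ℚ) + 1)
      = (∑ k ∈ Finset.Icc 1 n, (((k - 1 : ℕ)) : ℚ) * (rowOdd p k : ℚ))
        + ((∑ k ∈ Finset.Icc 1 n, (k - 1) * ((n - k) / 2) : ℕ) : ℚ)
        - 1 / 6 * (m : ℚ) * ((m : ℚ) - 1) * (4 * (m : ℚ) + 1) := by
        rw [hstep1, hstep2]
    _ = ∑ k ∈ Finset.Icc 1 n, ((k : ℚ) - 1) * (rowOdd p k : ℚ) := by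
        rw [hCQ, Finset.sum_congr rfl fun k hk => by rw [hcast k hk]]
        ring
end

section
/- Let m ≥ 0 and let p = (p_1 ≥ p_2 ≥ … ≥ p_{2m} ≥ 0) be a partition with at most 2m parts. Set β_k = ⌊(p_k + 2m − k)/2⌋ for 1 ≤ k ≤ 2m. Then Σ_{1≤k₁<k₂≤2m} min{β_{k₁}, β_{k₂}} − (1/6)·m(m−1)(4m−5) = Σ_{k=1}^{2m} (k−1)·p_k^ev. -/
/-- The number of even boxes in row `k` of the Young diagram of `p`:
boxes `(k,j)` with `1 ≤ j ≤ p k` and `k + j` even. -/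
def rowEv (p : ℕ → ℕ) (k : ℕ) : ℕ :=
  ((Finset.Icc 1 (p k)).filter fun j => Even (k + j)).card

/-- Counting `j ∈ [1,n]` with `c + j` even gives `⌊(n + c % 2)/2⌋`. -/
lemma rowEv_aux (c : ℕ) : ∀ n : ℕ,
    ((Finset.Icc 1 n).filter fun j => Even (c + j)).card = (n + c % 2) / 2 := by
  intro n
  induction n with
  | zero => simp
  | succ n ih =>
    have hIcc : Finset.Icc 1 (n+1) = insert (n+1) (Finset.Icc 1 n) := by
      ext x; simp only [Finset.mem_insert, Finset.mem_Icc]; omega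
    rw [hIcc, Finset.filter_insert]
    by_cases h : Even (c + (n+1))
    · rw [if_pos h, Finset.card_insert_of_notMem (by simp)]
      rw [Nat.even_iff] at h
      omega
    · rw [if_neg h]
      rw [Nat.even_iff] at h
      omega

/-- The pure-in-`m` part of the sum. -/
def fAux (m : ℕ) : ℕ := ∑ k ∈ Finset.Icc 1 (2*m), (k-1)*(m - (k+1)/2)

def gAux (m : ℕ) : ℕ := ∑ k ∈ Finset.Icc 1 (2*m), (k-1)

lemma gAux_succ (m : ℕ) : gAux (m+1) = gAux m + (4*m+1) := by
  unfold gAux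
  have h : 2*(m+1) = (2*m+1)+1 := by ring
  rw [h, Finset.sum_Icc_succ_top (by omega), Finset.sum_Icc_succ_top (by omega)]
  omega

lemma gAux_val (m : ℕ) : (gAux m : ℚ) = m * (2*m - 1) := by
  induction m with
  | zero => simp [gAux]
  | succ m ih =>
    rw [gAux_succ]
    push_cast
    rw [ih]
    ring

lemma fAux_succ (m : ℕ) : fAux (m+1) = fAux m + gAux m := by
  unfold fAux gAux
  have h : 2*(m+1) = (2*m+1)+1 := by ring
  rw [h, Finset.sum_Icc_succ_top (by omega), Finset.sum_Icc_succ_top (by omega)]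
  have e1 : (m+1) - ((2*m+1)+1+1)/2 = 0 := by omega
  have e2 : (m+1) - (2*m+1+1)/2 = 0 := by omega
  rw [e1, e2, Nat.mul_zero, Nat.mul_zero]
  rw [← Finset.sum_add_distrib]
  simp only [add_zero]
  apply Finset.sum_congr rfl
  intro k hk
  rw [Finset.mem_Icc] at hk
  have : m + 1 - (k+1)/2 = (m - (k+1)/2) + 1 := by omega
  rw [this, Nat.mul_succ]

lemma fAux_val (m : ℕ) : (fAux m : ℚ) = 1/6 * m * (m-1) * (4*m-5) := by
  induction m with
  | zero => simp [fAux]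
  | succ m ih =>
    rw [fAux_succ]
    push_cast
    rw [ih, gAux_val]
    ring

/-- with `β_k = ⌊(p_k + 2m − k)/2⌋`,
`Σ_{k₁<k₂} min{β_{k₁},β_{k₂}} − (1/6)m(m−1)(4m−5) = Σ_k (k−1)·p_k^ev`. -/
theorem lusztig_symbol_identity_typeD (m : ℕ) (p : ℕ → ℕ)
    (hdec : ∀ k l, 1 ≤ k → k ≤ l → l ≤ 2 * m → p l ≤ p k) :
    (∑ k₁ ∈ Finset.Icc 1 (2 * m), ∑ k₂ ∈ Finset.Icc 1 (2 * m),
        if k₁ < k₂ then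
          ((min ((p k₁ + 2 * m - k₁) / 2) ((p k₂ + 2 * m - k₂) / 2) : ℕ) : ℚ)
        else 0) -
      1 / 6 * (m : ℚ) * ((m : ℚ) - 1) * (4 * (m : ℚ) - 5) =
      ∑ k ∈ Finset.Icc 1 (2 * m), ((k : ℚ) - 1) * (rowEv p k : ℚ) := by
  -- The sequence `k ↦ (p k + 2m - k)/2` is weakly decreasing.
  have hmono : ∀ k1 k2, 1 ≤ k1 → k1 ≤ k2 → k2 ≤ 2*m →
      (p k2 + 2*m - k2)/2 ≤ (p k1 + 2*m - k1)/2 := by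
    intro k1 k2 h1 h2 h3
    apply Nat.div_le_div_right
    have := hdec k1 k2 h1 h2 h3
    omega
  -- Collapse the double sum of minima to `Σ (k-1)·β_k`.
  have hL : (∑ k₁ ∈ Finset.Icc 1 (2 * m), ∑ k₂ ∈ Finset.Icc 1 (2 * m),
        if k₁ < k₂ then
          ((min ((p k₁ + 2 * m - k₁) / 2) ((p k₂ + 2 * m - k₂) / 2) : ℕ) : ℚ)
        else 0)
      = ∑ k ∈ Finset.Icc 1 (2*m), ((k-1 : ℕ) : ℚ) * (((p k + 2*m - k)/2 : ℕ) : ℚ) := by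
    rw [Finset.sum_comm]
    apply Finset.sum_congr rfl
    intro k2 hk2
    rw [Finset.mem_Icc] at hk2
    have hcong : ∀ k1 ∈ Finset.Icc 1 (2*m),
        (if k1 < k2 then ((min ((p k1 + 2*m - k1)/2) ((p k2 + 2*m - k2)/2) : ℕ) : ℚ) else 0)
        = if k1 < k2 then (((p k2 + 2*m - k2)/2 : ℕ) : ℚ) else 0 := by
      intro k1 hk1
      rw [Finset.mem_Icc] at hk1
      by_cases h : k1 < k2
      · rw [if_pos h, if_pos h, min_eq_right (hmono k1 k2 hk1.1 (le_of_lt h) hk2.2)]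
      · rw [if_neg h, if_neg h]
    rw [Finset.sum_congr rfl hcong, ← Finset.sum_filter]
    have hfilt : (Finset.Icc 1 (2*m)).filter (fun k1 => k1 < k2) = Finset.Icc 1 (k2-1) := by
      ext x
      simp only [Finset.mem_filter, Finset.mem_Icc]
      omega
    rw [hfilt, Finset.sum_const, Nat.card_Icc, nsmul_eq_mul]
    norm_num
  rw [hL]
  -- `β_k = rowEv p k + (m - ⌈k/2⌉)`, so the sum splits off `fAux m`.
  have hsplit : ∑ k ∈ Finset.Icc 1 (2*m), ((k-1 : ℕ) : ℚ) * (((p k + 2*m - k)/2 : ℕ) : ℚ)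
      = (∑ k ∈ Finset.Icc 1 (2 * m), ((k : ℚ) - 1) * (rowEv p k : ℚ)) + (fAux m : ℚ) := by
    rw [fAux, Nat.cast_sum, ← Finset.sum_add_distrib]
    apply Finset.sum_congr rfl
    intro k hk
    rw [Finset.mem_Icc] at hk
    have hbeta : (p k + 2*m - k)/2 = rowEv p k + (m - (k+1)/2) := by
      have hr : rowEv p k = (p k + k % 2)/2 := rowEv_aux k (p k)
      omega
    rw [hbeta]
    push_cast [Nat.cast_sub hk.1]
    ring
  rw [hsplit, fAux_val]
  ring
end
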